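/- (Recovery theorem.) Let v : Fin N → ℝ≥0 be a weighted set, let C ⊆ Fin N be a finite candidate set with supp(v) ⊆ C, suppose N_W > 2 · |supp(v)|, and let 0 < δ ≤ 1 satisfy δ · 2^{N_D} > |C| (equivalently, N_D > log₂(|C|/δ)). If the family H = (h_1,…,h_{N_D}) is drawn uniformly at random in the random-hash model, then with probability at least 1 − δ, v is recovered from S_H(v) using C, i.e. CM_H(i, S_H(v)) = v i for every i ∈ C. -/

import Mathlib

open Finset

/-- The primitive sketch of a weighted set `v` under hash function `h`. -/
def sketch {N NW : ℕ} (h : Fin N → Fin NW) (v : Fin N → NNReal) : Fin NW → NNReal :=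
  fun k => ∑ i ∈ Finset.univ.filter (fun i => h i = k), v i

/-- The support of a weighted set, as a finset. -/
noncomputable def supp {N : ℕ} (v : Fin N → NNReal) : Finset (Fin N) :=
  Finset.univ.filter (fun i => v i ≠ 0)

/-- The count-min sketch of `v` under the family `H`: the `j`-th row is the
primitive sketch of `v` under `H j`. -/
def cmSketch {N NW ND : ℕ} (H : Fin ND → Fin N → Fin NW) (v : Fin N → NNReal) :
    Fin ND → Fin NW → NNReal :=
  fun j => sketch (H j) v

/-- The count-min lookup of `i` in an `ND × NW` matrix `M`, relative to the
family `H`: the minimum over `j` of `M[j, h_j(i)]`. -/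
noncomputable def cmLookup {N NW ND : ℕ} (H : Fin ND → Fin N → Fin NW)
    (M : Fin ND → Fin NW → NNReal) (i : Fin N) : NNReal :=
  ⨅ j, M j (H j i)

/-! The lookup at `i` can only overestimate `v i`, and it is exact as soon as one row `h_j` sends
no other element of `supp v` to the bucket of `i`. For one uniform hash, each such element lands
there with probability `1 / N_W`, so a collision has probability at most `|supp v| / N_W < 1 / 2`.
The rows are independent, so all of them collide with probability below `2 ^ (-N_D)`, and a union
bound over `C` bounds the failure probability by `|C| / 2 ^ N_D < δ`. -/

section Counting

variable {α β : Type*} [Fintype α] [DecidableEq α] [Fintype β] [DecidableEq β]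

def collisionProdEquiv {a b : α} (hab : a ≠ b) : {f : α → β // f a = f b} × β ≃ (α → β) where
  toFun p := Function.update p.1.1 a p.2
  invFun g := (⟨Function.update g a (g b), by simp [hab.symm]⟩, g a)
  left_inv := by
    rintro ⟨⟨f, hf⟩, c⟩
    simp [hab.symm, ← hf]
  right_inv g := by simp

theorem card_filter_apply_eq_apply_mul {a b : α} (hab : a ≠ b) :
    #{f : α → β | f a = f b} * Fintype.card β = Fintype.card β ^ Fintype.card α := by
  rw [← Fintype.card_subtype, ← Fintype.card_prod, Fintype.card_congr (collisionProdEquiv hab),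
    Fintype.card_fun]

theorem card_filter_exists_apply_eq_mul_le (s : Finset α) (a : α) :
    #{f : α → β | ∃ x ∈ s, x ≠ a ∧ f x = f a} * Fintype.card β
      ≤ #s * Fintype.card β ^ Fintype.card α := by
  have hsub : ({f : α → β | ∃ x ∈ s, x ≠ a ∧ f x = f a} : Finset _)
      ⊆ (s.erase a).biUnion fun x ↦ {f | f x = f a} := by
    intro f hf
    obtain ⟨x, hxs, hxa, hfx⟩ := (mem_filter.1 hf).2
    exact mem_biUnion.2 ⟨x, mem_erase.2 ⟨hxa, hxs⟩, mem_filter.2 ⟨mem_univ f, hfx⟩⟩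
  calc _ ≤ (∑ x ∈ s.erase a, #{f : α → β | f x = f a}) * Fintype.card β := by
        gcongr; exact (card_le_card hsub).trans card_biUnion_le
    _ = #(s.erase a) * Fintype.card β ^ Fintype.card α := by
        rw [sum_mul, sum_congr rfl fun x hx ↦ card_filter_apply_eq_apply_mul (ne_of_mem_erase hx),
          sum_const, smul_eq_mul]
    _ ≤ _ := by gcongr; exact erase_subset a s

end Counting

section Sketch

variable {N NW ND : ℕ}

abbrev Collides (h : Fin N → Fin NW) (v : Fin N → NNReal) (i : Fin N) : Prop :=
  ∃ i' ∈ supp v, i' ≠ i ∧ h i' = h i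

theorem le_sketch_apply (h : Fin N → Fin NW) (v : Fin N → NNReal) (i : Fin N) :
    v i ≤ sketch h v (h i) :=
  single_le_sum (fun _ _ ↦ zero_le) (by simp)

theorem sketch_apply_eq_of_not_collides {h : Fin N → Fin NW} {v : Fin N → NNReal} {i : Fin N}
    (hi : ¬ Collides h v i) : sketch h v (h i) = v i := by
  refine sum_eq_single_of_mem i (by simp) fun i' hi' hne ↦ ?_
  by_contra hv
  exact hi ⟨i', by simpa [supp] using hv, hne, (mem_filter.1 hi').2⟩

theorem cmLookup_cmSketch_eq_of_not_collides {H : Fin ND → Fin N → Fin NW} {v : Fin N → NNReal}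
    {i : Fin N} {j : Fin ND} (hj : ¬ Collides (H j) v i) :
    cmLookup H (cmSketch H v) i = v i := by
  have : Nonempty (Fin ND) := ⟨j⟩
  exact le_antisymm ((ciInf_le' _ j).trans (sketch_apply_eq_of_not_collides hj).le)
    (le_ciInf fun j' ↦ le_sketch_apply (H j') v i)

theorem two_mul_card_collides_le {v : Fin N → NNReal}
    (hW : 2 * #(supp v) < NW) (i : Fin N) :
    2 * #{h : Fin N → Fin NW | Collides h v i} ≤ NW ^ N := by
  have hcount : #{h : Fin N → Fin NW | Collides h v i} * NW ≤ #(supp v) * NW ^ N := by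
    -- `convert` reconciles the decidability instances (`Nat.decidableExistsFin` vs. the `Finset` one)
    convert card_filter_exists_apply_eq_mul_le (β := Fin NW) (supp v) i <;> simp
  refine Nat.le_of_mul_le_mul_right ?_ (Nat.zero_lt_of_lt hW)
  nlinarith [Nat.zero_le (NW ^ N)]

theorem card_filter_not_recovered_mul_le {v : Fin N → NNReal} (hW : 2 * #(supp v) < NW)
    (C : Finset (Fin N)) :
    #{H : Fin ND → Fin N → Fin NW | ¬ ∀ i ∈ C, cmLookup H (cmSketch H v) i = v i} * 2 ^ ND
      ≤ #C * Fintype.card (Fin ND → Fin N → Fin NW) := by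
  have hsub : ({H : Fin ND → Fin N → Fin NW | ¬ ∀ i ∈ C, cmLookup H (cmSketch H v) i = v i}
        : Finset _) ⊆ C.biUnion fun i ↦ Fintype.piFinset fun _ ↦ {h | Collides h v i} := by
    intro H hH
    obtain ⟨i, hiC, hne⟩ := not_forall₂.1 (mem_filter.1 hH).2
    refine mem_biUnion.2 ⟨i, hiC, Fintype.mem_piFinset.2 fun j ↦ mem_filter.2 ⟨mem_univ _, ?_⟩⟩
    by_contra hj
    exact hne (cmLookup_cmSketch_eq_of_not_collides hj)
  calc _ ≤ (∑ i ∈ C, #(Fintype.piFinset fun _ : Fin ND ↦ {h : Fin N → Fin NW | Collides h v i}))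
          * 2 ^ ND := by
        gcongr; exact (card_le_card hsub).trans card_biUnion_le
    _ = ∑ i ∈ C, (2 * #{h : Fin N → Fin NW | Collides h v i}) ^ ND := by
        simp only [Fintype.card_piFinset_const, sum_mul, mul_pow, mul_comm (2 ^ ND)]
    _ ≤ ∑ _i ∈ C, (NW ^ N) ^ ND := by
        gcongr with i; exact two_mul_card_collides_le hW i
    _ = _ := by simp

end Sketch

theorem prob_recovery_ge_general
    {N NW ND : ℕ}
    (v : Fin N → NNReal) (C : Finset (Fin N))
    (hW : 2 * (supp v).card < NW)
    (δ : ℝ)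
    (hD : (C.card : ℝ) < δ * 2 ^ ND) :
    (1 : ℝ) - δ ≤
      ((Finset.univ.filter (fun H : Fin ND → Fin N → Fin NW =>
          ∀ i ∈ C, cmLookup H (cmSketch H v) i = v i)).card : ℝ)
        / (Fintype.card (Fin ND → Fin N → Fin NW) : ℝ) := by
  have hT : (0 : ℝ) < Fintype.card (Fin ND → Fin N → Fin NW) := by
    have : Nonempty (Fin NW) := ⟨⟨0, Nat.zero_lt_of_lt hW⟩⟩
    exact_mod_cast Fintype.card_pos
  have hsplit := congrArg (Nat.cast (R := ℝ)) <| card_filter_add_card_filter_not (s := univ)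
    fun H : Fin ND → Fin N → Fin NW ↦ ∀ i ∈ C, cmLookup H (cmSketch H v) i = v i
  rw [Nat.cast_add, card_univ] at hsplit
  have hfail : (#{H : Fin ND → Fin N → Fin NW | ¬ ∀ i ∈ C, cmLookup H (cmSketch H v) i = v i}
      : ℝ) * 2 ^ ND < δ * Fintype.card (Fin ND → Fin N → Fin NW) * 2 ^ ND :=
    calc _ ≤ (C.card : ℝ) * Fintype.card (Fin ND → Fin N → Fin NW) := by
          exact_mod_cast card_filter_not_recovered_mul_le hW C
      _ < δ * 2 ^ ND * Fintype.card (Fin ND → Fin N → Fin NW) := by gcongr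
      _ = _ := by ring
  rw [le_div_iff₀ hT]
  linarith [lt_of_mul_lt_mul_right hfail (by positivity)]

/-- Recovery theorem: if `supp v ⊆ C`, `NW > 2 * |supp v|`, `0 < δ ≤ 1` and
`δ * 2 ^ ND > |C|`, then for `H` drawn uniformly at random, with probability
at least `1 - δ` we have `CM_H(i, S_H(v)) = v i` for every `i ∈ C`. -/
theorem prob_recovery_ge
    {N NW ND : ℕ} (hN : 0 < N) (hNW : 0 < NW) (hND : 0 < ND)
    (v : Fin N → NNReal) (C : Finset (Fin N))
    (hsub : supp v ⊆ C)
    (hW : 2 * (supp v).card < NW)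
    (δ : ℝ) (hδ0 : 0 < δ) (hδ1 : δ ≤ 1)
    (hD : (C.card : ℝ) < δ * 2 ^ ND) :
    (1 : ℝ) - δ ≤
      ((Finset.univ.filter (fun H : Fin ND → Fin N → Fin NW =>
          ∀ i ∈ C, cmLookup H (cmSketch H v) i = v i)).card : ℝ)
        / (Fintype.card (Fin ND → Fin N → Fin NW) : ℝ) :=
  prob_recovery_ge_general v C hW δ hD
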